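/- Tabulation hashing with uniformly random tables is 3-independent: if T₁, T₂ : Fin N → ZMod m are chosen independently and uniformly at random, then for any three distinct keys x₁, x₂, x₃ (each a pair of characters in Fin N × Fin N) and any hash values y₁, y₂, y₃ ∈ ZMod m, the probability that h(xᵢ) = yᵢ for all i equals m^{-3}, where h(a,b) = T₁(a) + T₂(b) (group operation in ZMod m, modeling XOR). -/

import Mathlib

open scoped Classical

/-!
For fixed keys, `T ↦ (h(x₀), h(x₁), h(x₂))` is an additive homomorphism from pairs of tables
to `G³`, and all fibres of a surjective homomorphism between finite groups have the same size,
so it suffices to prove surjectivity, i.e. to hit every `Pi.single i t`. If the first or second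
character of `xᵢ` occurs at that position in no other key, put `t` in that table entry. Otherwise
some `xⱼ` shares the first character `a` of `xᵢ` and the remaining key `xₖ` shares its second
character; then `T₁ = Pi.single a t`, `T₂ = -Pi.single (xⱼ).2 t` works.
-/

open Function Finset

section Tabulation

variable {ι α β G : Type*} [AddCommGroup G]

def tabulationHash (x : ι → α × β) : (α → G) × (β → G) →+ (ι → G) where
  toFun T i := T.1 (x i).1 + T.2 (x i).2
  map_zero' := by ext; simp
  map_add' _ _ := by ext; simp [add_add_add_comm]

section Single

variable [DecidableEq ι] {x : ι → α × β}

lemma tabulationHash_single_fst [DecidableEq α] {i : ι} (hi : ∀ j ≠ i, (x j).1 ≠ (x i).1)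
    (t : G) : tabulationHash x (Pi.single (x i).1 t, 0) = Pi.single i t := by
  ext j
  rcases eq_or_ne j i with rfl | hj
  · simp [tabulationHash]
  · simp [tabulationHash, hj, hi j hj]

lemma tabulationHash_single_snd [DecidableEq β] {i : ι} (hi : ∀ j ≠ i, (x j).2 ≠ (x i).2)
    (t : G) : tabulationHash x (0, Pi.single (x i).2 t) = Pi.single i t := by
  ext j
  rcases eq_or_ne j i with rfl | hj
  · simp [tabulationHash]
  · simp [tabulationHash, hj, hi j hj]

end Single

lemma exists_tabulationHash_eq_single [DecidableEq α] [DecidableEq β] {x : Fin 3 → α × β}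
    (hx : Injective x) (i : Fin 3) (t : G) : ∃ T, tabulationHash x T = Pi.single i t := by
  by_cases h₁ : ∀ j ≠ i, (x j).1 ≠ (x i).1
  · exact ⟨_, tabulationHash_single_fst h₁ t⟩
  by_cases h₂ : ∀ j ≠ i, (x j).2 ≠ (x i).2
  · exact ⟨_, tabulationHash_single_snd h₂ t⟩
  push Not at h₁ h₂
  obtain ⟨j, hji, hj⟩ := h₁
  obtain ⟨k, hki, hk⟩ := h₂
  have hj₂ : (x j).2 ≠ (x i).2 := fun h ↦ hji (hx (Prod.ext hj h))
  have hk₁ : (x k).1 ≠ (x i).1 := fun h ↦ hki (hx (Prod.ext h hk))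
  have hkj : (x k).2 ≠ (x j).2 := hk ▸ hj₂.symm
  have hjk : j ≠ k := by rintro rfl; exact hk₁ hj
  have hl : ∀ l, l = i ∨ l = j ∨ l = k := by omega
  refine ⟨(Pi.single (x i).1 t, -Pi.single (x j).2 t), funext fun l ↦ ?_⟩
  rcases hl l with rfl | rfl | rfl
  · simp [tabulationHash, hj₂.symm]
  · simp [tabulationHash, hj, hji]
  · simp [tabulationHash, hk₁, hkj, hki]

theorem tabulationHash_surjective [DecidableEq α] [DecidableEq β] {x : Fin 3 → α × β}
    (hx : Injective x) : Surjective (tabulationHash (G := G) x) := by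
  intro y
  choose T hT using fun i ↦ exists_tabulationHash_eq_single hx i (y i)
  exact ⟨∑ i, T i, by simp [hT, univ_sum_single]⟩

end Tabulation

theorem AddMonoidHom.card_fiber_mul_card_of_surjective {G H : Type*} [AddGroup G] [Fintype G]
    [AddMonoid H] [Fintype H] [DecidableEq H] (f : G →+ H) (hf : Surjective f) (y : H) :
    #{g | f g = y} * Fintype.card H = Fintype.card G := by
  have hfiber (z : H) : #{g | f g = z} = #{g | f g = y} :=
    AddMonoidHom.card_fiber_eq_of_mem_range f (hf z) (hf y)
  calc #{g | f g = y} * Fintype.card H = ∑ z : H, #{g | f g = z} := by simp [hfiber, mul_comm]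
    _ = Fintype.card G := (card_eq_sum_card_fiberwise fun _ _ ↦ mem_univ _).symm

theorem tabulation_three_independent_general (N m : ℕ) [NeZero m]
    (x : Fin 3 → Fin N × Fin N) (hx : Function.Injective x)
    (y : Fin 3 → ZMod m) :
    ((Finset.univ.filter
        (fun T : (Fin N → ZMod m) × (Fin N → ZMod m) =>
          ∀ i, T.1 (x i).1 + T.2 (x i).2 = y i)).card : ℚ) /
      (Fintype.card ((Fin N → ZMod m) × (Fin N → ZMod m)) : ℚ) = 1 / (m : ℚ) ^ 3 := by
  have hfilter : (Finset.univ.filter fun T : (Fin N → ZMod m) × (Fin N → ZMod m) =>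
      ∀ i, T.1 (x i).1 + T.2 (x i).2 = y i) = ({T | tabulationHash x T = y} : Finset _) := by
    simp [funext_iff, tabulationHash]
  have hcard := (tabulationHash x).card_fiber_mul_card_of_surjective
    (tabulationHash_surjective hx) y
  have hm : (m : ℚ) ^ 3 ≠ 0 := by simp [NeZero.ne m]
  rw [hfilter, div_eq_div_iff (Nat.cast_ne_zero.mpr Fintype.card_ne_zero) hm, one_mul, ← hcard]
  simp [ZMod.card]

theorem tabulation_three_independent (N m : ℕ) (hN : 3 ≤ N) [NeZero m]
    (x : Fin 3 → Fin N × Fin N) (hx : Function.Injective x)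
    (y : Fin 3 → ZMod m) :
    ((Finset.univ.filter
        (fun T : (Fin N → ZMod m) × (Fin N → ZMod m) =>
          ∀ i, T.1 (x i).1 + T.2 (x i).2 = y i)).card : ℚ) /
      (Fintype.card ((Fin N → ZMod m) × (Fin N → ZMod m)) : ℚ) = 1 / (m : ℚ) ^ 3 :=
  tabulation_three_independent_general N m x hx y
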